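/- Define λ_0 = 0 and λ_{ℓ+1} = ℓ + 1 + sqrt(λ_ℓ) for ℓ ≥ 0. Then as n → ∞, λ_n = n + sqrt(n) + 1/2 - 3/(8√n) - 1/(4n) + O(n^{-3/2}); in particular λ_n/(n + √n + 1/2) → 1, and the infinite product ∏_{n≥1} λ_n/(n + √n + 1/2) converges to a finite positive limit. -/

import Mathlib

/-!
Put `g t = t + 1/2 - 3/(8t) - 1/(4t²)` (`sqrtLamApprox` below), so that the claimed expansion
reads `λ_n ≈ n + g(√n)`. Since `λ_{n+1} = (n+1) + √λ_n`, an error bound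
`|λ_n - (n + g(√n))| ≤ 2000 n^{-3/2}` propagates from `n` to `n+1` as soon as `(g(t) ± 2000 t⁻³)²`
lies on the correct side of `s² + g(s) ± 2000 s⁻³` for `s = √n`, `t = √(n+1)`; this follows from
an explicit identity in `s, t, s⁻¹, t⁻¹`. Crude bounds `n + √n - 1 ≤ λ_n ≤ n + √n + 1` start the
induction at `n = 100`. Consequently `λ_n / (n + √n + 1/2) - 1 = O(n^{-3/2})` is summable, and
the partial products converge to `exp (∑ log (λ_n / (n + √n + 1/2))) > 0`.
-/

open Real Filter Asymptotics

/-- `λ₀ = 0`, `λ_{ℓ+1} = ℓ + 1 + √(λ_ℓ)`. -/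
noncomputable def lamSeq : ℕ → ℝ
  | 0 => 0
  | ℓ + 1 => (ℓ : ℝ) + 1 + Real.sqrt (lamSeq ℓ)

lemma ten_le_sqrt {x : ℝ} (hx : 100 ≤ x) : 10 ≤ √x :=
  le_sqrt_of_sq_le (by linarith)

lemma rpow_neg_three_div_two {x : ℝ} (hx : 0 ≤ x) : x ^ (-(3 : ℝ) / 2) = (√x)⁻¹ ^ 3 := by
  rw [sqrt_eq_rpow, ← inv_rpow hx, ← rpow_natCast, ← rpow_mul (by positivity), neg_div,
    rpow_neg hx, ← inv_rpow hx]
  norm_num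

lemma isBigO_rpow_neg_three_div_two_of_le {f : ℕ → ℝ} (C : ℝ) {N : ℕ}
    (h : ∀ n ≥ N, |f n| ≤ C * (√n)⁻¹ ^ 3) :
    f =O[atTop] fun n : ℕ => (n : ℝ) ^ (-(3 : ℝ) / 2) := by
  refine IsBigO.of_bound C ?_
  filter_upwards [eventually_ge_atTop N] with n hn
  rw [norm_eq_abs, norm_of_nonneg (by positivity), rpow_neg_three_div_two (by positivity)]
  exact h n hn

lemma exists_pos_tendsto_prod_range_of_summable {f : ℕ → ℝ} (hpos : ∀ n, 0 < f n)
    (hf : Summable fun n => f n - 1) :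
    ∃ L, 0 < L ∧ Tendsto (fun M => ∏ n ∈ Finset.range M, f n) atTop (nhds L) := by
  have hlog : Summable fun n => log (f n) := by
    simpa using Real.summable_log_one_add_of_summable hf
  exact ⟨_, exp_pos _, (Real.hasProd_of_hasSum_log hpos hlog.hasSum).tendsto_prod_nat⟩

noncomputable def sqrtLamApprox (t : ℝ) : ℝ := t + 1 / 2 - 3 / (8 * t) - 1 / (4 * t ^ 2)

-- For `ε ≥ 0` every term on the right is nonnegative; for `ε = -2000` the middle one dominates.
lemma sq_sqrtLamApprox_add_sub {s t : ℝ} (ε : ℝ) (hs : s ≠ 0) (ht : t ≠ 0)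
    (hst : t ^ 2 = s ^ 2 + 1) :
    (sqrtLamApprox t + ε * t⁻¹ ^ 3) ^ 2 - (s ^ 2 + sqrtLamApprox s + ε * s⁻¹ ^ 3) =
      (t - s) * (1 / 2 * (t - s) * t⁻¹ + 3 / 8 * s⁻¹ * t⁻¹ + 1 / 4 * s⁻¹ * t⁻¹ * (s⁻¹ + t⁻¹))
        + ε * (2 * t⁻¹ ^ 2 - s⁻¹ ^ 3 + t⁻¹ ^ 3)
        + (3 / 8 * t⁻¹ + 1 / 4 * t⁻¹ ^ 2 - ε * t⁻¹ ^ 3) ^ 2 := by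
  have hsa : s * s⁻¹ = 1 := mul_inv_cancel₀ hs
  have htb : t * t⁻¹ = 1 := mul_inv_cancel₀ ht
  simp only [sqrtLamApprox, div_eq_mul_inv, mul_inv, ← inv_pow]
  linear_combination (3/8*t⁻¹ + 1/4*t⁻¹^2 + 1/4*s⁻¹*t⁻¹) * hsa
      + (-3/4 - 1/2*t⁻¹ + 2*ε*t⁻¹^2 - 3/8*s⁻¹ - 1/4*s⁻¹*t⁻¹ - 1/4*s⁻¹^2 - t + s) * htb
      + (1 + 1/2*t⁻¹) * hst

lemma le_of_sq_eq_sq_add_one {s t : ℝ} (ht : 0 ≤ t) (hst : t ^ 2 = s ^ 2 + 1) : s ≤ t := by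
  nlinarith

lemma sub_le_inv_div_two {s t : ℝ} (hs : 0 < s) (ht : 0 ≤ t) (hst : t ^ 2 = s ^ 2 + 1) :
    t - s ≤ s⁻¹ / 2 := by
  have hsa : s * s⁻¹ = 1 := mul_inv_cancel₀ hs.ne'
  nlinarith [le_of_sq_eq_sq_add_one ht hst, inv_pos.2 hs]

lemma inv_pow_three_le_inv_sq {s t : ℝ} (hs : 2 ≤ s) (hst : t ^ 2 = s ^ 2 + 1) :
    s⁻¹ ^ 3 ≤ t⁻¹ ^ 2 := by
  rw [inv_pow, inv_pow]
  exact inv_anti₀ (by nlinarith) (by nlinarith)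

lemma inv_le_two_mul_inv {s t : ℝ} (hs : 1 ≤ s) (ht : 0 ≤ t) (hst : t ^ 2 = s ^ 2 + 1) :
    s⁻¹ ≤ 2 * t⁻¹ := by
  have hts : t ≤ 2 * s := by nlinarith
  have ht0 : 0 < t := by nlinarith
  calc s⁻¹ = 2 * (2 * s)⁻¹ := by field_simp
    _ ≤ 2 * t⁻¹ := by gcongr

lemma sq_le_sq_sqrtLamApprox_add {s t C : ℝ} (hs : 2 ≤ s) (ht : 0 ≤ t)
    (hst : t ^ 2 = s ^ 2 + 1) (hC : 0 ≤ C) :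
    s ^ 2 + sqrtLamApprox s + C * s⁻¹ ^ 3 ≤ (sqrtLamApprox t + C * t⁻¹ ^ 3) ^ 2 := by
  have hts := le_of_sq_eq_sq_add_one ht hst
  have h32 := inv_pow_three_le_inv_sq hs hst
  rw [← sub_nonneg, sq_sqrtLamApprox_add_sub C (by linarith) (by linarith) hst]
  have : 0 ≤ s⁻¹ := by positivity
  have : 0 ≤ t⁻¹ := by positivity
  have : 0 ≤ t - s := by linarith
  have : 0 ≤ 2 * t⁻¹ ^ 2 - s⁻¹ ^ 3 + t⁻¹ ^ 3 := by nlinarith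
  positivity

lemma sq_sqrtLamApprox_sub_le {s t : ℝ} (hs : 10 ≤ s) (ht : 0 ≤ t)
    (hst : t ^ 2 = s ^ 2 + 1) :
    (sqrtLamApprox t - 2000 * t⁻¹ ^ 3) ^ 2 ≤ s ^ 2 + sqrtLamApprox s - 2000 * s⁻¹ ^ 3 := by
  have hts := le_of_sq_eq_sq_add_one ht hst
  have h := sq_sqrtLamApprox_add_sub (-2000) (by linarith) (by linarith) hst
  simp only [neg_mul, ← sub_eq_add_neg, sub_neg_eq_add] at h
  rw [← sub_nonpos, h]
  have hab := inv_le_two_mul_inv (by linarith) ht hst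
  have h32 := inv_pow_three_le_inv_sq (by linarith) hst
  have hd := sub_le_inv_div_two (by linarith) ht hst
  have hba : t⁻¹ ≤ s⁻¹ := inv_anti₀ (by linarith) hts
  have ha : s⁻¹ ≤ 1 / 10 := by rw [inv_le_comm₀ (by linarith) (by norm_num)]; linarith
  set a := s⁻¹
  set b := t⁻¹
  have hb : 0 < b := inv_pos.2 (by linarith)
  have hd0 : 0 ≤ t - s := by linarith
  have hin : 1 / 2 * (t - s) * b + 3 / 8 * a * b + 1 / 4 * a * b * (a + b) ≤ 2 * b ^ 2 := by
    have : a * b ≤ 2 * b ^ 2 := by nlinarith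
    have : a * b * (a + b) ≤ 2 * b ^ 2 := by nlinarith
    nlinarith
  have hR : (t - s) * (1 / 2 * (t - s) * b + 3 / 8 * a * b + 1 / 4 * a * b * (a + b)) ≤ b ^ 2 := by
    nlinarith
  have hQ : 3 / 8 * b + 1 / 4 * b ^ 2 + 2000 * b ^ 3 ≤ 21 * b := by nlinarith
  have hQ2 : (3 / 8 * b + 1 / 4 * b ^ 2 + 2000 * b ^ 3) ^ 2 ≤ (21 * b) ^ 2 := by
    gcongr
  nlinarith

lemma sqrtLamApprox_nonneg {t : ℝ} (ht : 1 ≤ t) : 0 ≤ sqrtLamApprox t := by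
  have h1 : 3 / (8 * t) ≤ 3 / 8 := by gcongr; linarith
  have h2 : 1 / (4 * t ^ 2) ≤ 1 / 4 := by gcongr; nlinarith
  rw [sqrtLamApprox]
  linarith

lemma abs_sqrt_sub_sqrtLamApprox_le {s t x : ℝ} (hs : 10 ≤ s) (ht : 0 ≤ t)
    (hst : t ^ 2 = s ^ 2 + 1) (hx : |x - (s ^ 2 + sqrtLamApprox s)| ≤ 2000 * s⁻¹ ^ 3) :
    |√x - sqrtLamApprox t| ≤ 2000 * t⁻¹ ^ 3 := by
  rw [abs_le] at hx ⊢
  constructor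
  · have hsq : (sqrtLamApprox t - 2000 * t⁻¹ ^ 3) ^ 2 ≤ x := by
      linarith [sq_sqrtLamApprox_sub_le hs ht hst]
    linarith [le_abs_self (sqrtLamApprox t - 2000 * t⁻¹ ^ 3), abs_le_sqrt hsq]
  · have hup := sq_le_sq_sqrtLamApprox_add (by linarith) ht hst (show (0 : ℝ) ≤ 2000 by norm_num)
    have h0 : 0 ≤ sqrtLamApprox t + 2000 * t⁻¹ ^ 3 :=
      add_nonneg (sqrtLamApprox_nonneg (by nlinarith)) (by positivity)
    have hsq : x ≤ (sqrtLamApprox t + 2000 * t⁻¹ ^ 3) ^ 2 := by linarith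
    linarith [(sqrt_le_left h0).2 hsq]

lemma lamSeq_succ (n : ℕ) : lamSeq (n + 1) = n + 1 + √(lamSeq n) := rfl

lemma natCast_le_lamSeq (n : ℕ) : (n : ℝ) ≤ lamSeq n := by
  induction n with
  | zero => simp [lamSeq]
  | succ k ih =>
    rw [lamSeq_succ]
    push_cast
    linarith [sqrt_nonneg (lamSeq k)]

lemma lamSeq_le (n : ℕ) : lamSeq n ≤ n + √n + 1 := by
  induction n with
  | zero => simp [lamSeq]
  | succ k ih =>
    have hk : √(k + 1 : ℝ) ^ 2 = k + 1 := sq_sqrt (by positivity)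
    have hsqrt : √(lamSeq k) ≤ √(k + 1 : ℝ) + 1 := by
      rw [sqrt_le_left (by positivity), add_sq, hk]
      linarith [sqrt_le_sqrt (show (k : ℝ) ≤ k + 1 by linarith), sqrt_nonneg (k + 1 : ℝ)]
    rw [lamSeq_succ]
    push_cast
    linarith

lemma le_lamSeq {n : ℕ} (hn : 1 ≤ n) : n + √n - 1 ≤ lamSeq n := by
  obtain ⟨k, rfl⟩ := Nat.exists_eq_add_of_le' hn
  have hk : √(k : ℝ) ^ 2 = k := sq_sqrt (by positivity)
  have hsqrt : √(k + 1 : ℝ) ≤ √k + 1 := by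
    rw [sqrt_le_left (by positivity)]
    nlinarith [sqrt_nonneg (k : ℝ)]
  rw [lamSeq_succ]
  push_cast
  linarith [sqrt_le_sqrt (natCast_le_lamSeq k)]

lemma abs_lamSeq_sub_sqrtLamApprox_le {n : ℕ} (hn : 100 ≤ n) :
    |lamSeq n - (n + sqrtLamApprox √n)| ≤ 2000 * (√n)⁻¹ ^ 3 := by
  induction n, hn using Nat.le_induction with
  | base =>
    have h10 : √((100 : ℕ) : ℝ) = 10 := by
      rw [sqrt_eq_iff_mul_self_eq_of_pos (by norm_num)]; norm_num
    have hlow := le_lamSeq (show 1 ≤ 100 by norm_num)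
    have hup := lamSeq_le 100
    rw [h10] at hlow hup ⊢
    rw [abs_le, sqrtLamApprox]
    constructor <;> norm_num at hlow hup ⊢ <;> linarith
  | succ n hn ih =>
    have hs : √(n : ℝ) ^ 2 = n := sq_sqrt (by positivity)
    have ht : √(n + 1 : ℝ) ^ 2 = n + 1 := sq_sqrt (by positivity)
    have key := abs_sqrt_sub_sqrtLamApprox_le (s := √n) (t := √(n + 1)) (x := lamSeq n)
      (ten_le_sqrt (by exact_mod_cast hn)) (sqrt_nonneg _) (by rw [hs, ht]) (by rwa [hs])
    rw [lamSeq_succ]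
    push_cast
    rwa [add_sub_add_left_eq_sub]

lemma abs_lamSeq_div_sub_one_le {n : ℕ} (hn : 100 ≤ n) :
    |lamSeq n / (n + √n + 1 / 2) - 1| ≤ 21 * (√n)⁻¹ ^ 3 := by
  have h := abs_lamSeq_sub_sqrtLamApprox_le hn
  have hs10 := ten_le_sqrt (show (100 : ℝ) ≤ n by exact_mod_cast hn)
  set s := √(n : ℝ)
  have hn' : (n : ℝ) = s ^ 2 := (sq_sqrt (by positivity)).symm
  rw [hn'] at h ⊢
  have hD : 0 < s ^ 2 + s + 1 / 2 := by positivity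
  have hsa : s * s⁻¹ = 1 := mul_inv_cancel₀ (by linarith)
  have ha : s⁻¹ ≤ 1 / 10 := by rw [inv_le_comm₀ (by linarith) (by norm_num)]; linarith
  have hg : sqrtLamApprox s = s + 1 / 2 - 3 / 8 * s⁻¹ - 1 / 4 * s⁻¹ ^ 2 := by
    rw [sqrtLamApprox]; field_simp
  rw [div_sub_one hD.ne', abs_div, abs_of_pos hD, div_le_iff₀ hD]
  rw [hg, abs_le] at h
  rw [abs_le]
  set a := s⁻¹
  have ha0 : 0 < a := inv_pos.2 (by linarith)
  have ha2 : a ^ 2 ≤ a / 10 := by nlinarith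
  have ha3 : a ^ 3 ≤ a / 100 := by nlinarith
  have hscale : a ≤ a ^ 3 * (s ^ 2 + s + 1 / 2) := by
    have : a ^ 3 * s ^ 2 = a := by linear_combination a * (s * a + 1) * hsa
    nlinarith [pow_pos ha0 3]
  constructor <;> nlinarith

theorem lamSeq_asymptotics :
    ((fun n : ℕ => lamSeq n -
        ((n : ℝ) + Real.sqrt n + 1 / 2 - 3 / (8 * Real.sqrt n) - 1 / (4 * n)))
      =O[atTop] fun n : ℕ => (n : ℝ) ^ (-(3 : ℝ) / 2)) ∧
    Tendsto (fun n : ℕ => lamSeq n / ((n : ℝ) + Real.sqrt n + 1 / 2))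
      atTop (nhds 1) ∧
    ∃ L : ℝ, 0 < L ∧
      Tendsto (fun M : ℕ =>
          ∏ n ∈ Finset.Icc 1 M, lamSeq n / ((n : ℝ) + Real.sqrt n + 1 / 2))
        atTop (nhds L) := by
  set r : ℕ → ℝ := fun n => lamSeq n / ((n : ℝ) + Real.sqrt n + 1 / 2)
  have hr : (fun n => r n - 1) =O[atTop] fun n : ℕ => (n : ℝ) ^ (-(3 : ℝ) / 2) :=
    isBigO_rpow_neg_three_div_two_of_le 21 (N := 100) fun n hn => abs_lamSeq_div_sub_one_le hn
  refine ⟨isBigO_rpow_neg_three_div_two_of_le 2000 (N := 100) fun n hn => ?_, ?_, ?_⟩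
  · have happrox : (n : ℝ) + sqrtLamApprox √n =
        n + √n + 1 / 2 - 3 / (8 * √n) - 1 / (4 * n) := by
      rw [sqrtLamApprox, sq_sqrt (by positivity)]; ring
    rw [← happrox]
    exact abs_lamSeq_sub_sqrtLamApprox_le hn
  · have hlim : Tendsto (fun n : ℕ => (n : ℝ) ^ (-(3 : ℝ) / 2)) atTop (nhds 0) := by
      rw [neg_div]
      exact (tendsto_rpow_neg_atTop (by norm_num)).comp tendsto_natCast_atTop_atTop
    simpa using (hr.trans_tendsto hlim).add_const 1
  · have hpos (n : ℕ) : 0 < r (n + 1) :=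
      div_pos ((Nat.cast_pos.2 n.succ_pos).trans_le (natCast_le_lamSeq _)) (by positivity)
    have hsum : Summable fun n => r n - 1 :=
      summable_of_isBigO_nat (summable_nat_rpow.2 (by norm_num)) hr
    obtain ⟨L, hL, hprod⟩ :=
      exists_pos_tendsto_prod_range_of_summable hpos ((summable_nat_add_iff 1).2 hsum)
    refine ⟨L, hL, hprod.congr fun M => ?_⟩
    rw [Finset.range_eq_Ico, Finset.prod_Ico_add', Finset.Ico_add_one_right_eq_Icc]
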